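/- arXiv:1003.2747 — 4 statements merged into one kernel-verified Lean document; each statement's English description precedes it below -/
import Mathlib

section
/- Let n ≥ 1, let ξ₀ ∈ ℝ^n be nonzero, and let x, x', η ∈ ℝ^n. Define ψ(w) = (|ξ₀|/(2π))^{n/2} exp(i ξ₀·w − |ξ₀||w|²). Then | ∫_{ℝ^n} e^{−i η·u} ψ(x−u) conj(ψ(x'−u)) du | = (|ξ₀|/(8π))^{n/2} exp( −|η|²/(8|ξ₀|) − |ξ₀||x−x'|²/2 ). -/
open MeasureTheory

/-- The continuous-center complex Gaussian `ψ` with frequency center `ξ₀`. -/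
noncomputable def framePsi (n : ℕ) (ξ₀ : EuclideanSpace ℝ (Fin n))
    (w : EuclideanSpace ℝ (Fin n)) : ℂ :=
  (((‖ξ₀‖ / (2 * Real.pi)) ^ ((n : ℝ) / 2) : ℝ) : ℂ) *
    Complex.exp (Complex.I * ((inner ℝ ξ₀ w : ℝ) : ℂ) - ((‖ξ₀‖ * ‖w‖ ^ 2 : ℝ) : ℂ))

/-!
Completing the square, `ψ(x - u) · conj ψ(x' - u)` is a unimodular phase times
`(|ξ₀|/(2π))^n exp(-|ξ₀||x - x'|²/2)` times the real Gaussian `exp(-2|ξ₀||u - m|²)` centred at the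
midpoint `m` of `x` and `x'` (Apollonius' identity). Recentring at `m` only multiplies the
Fourier transform by a phase, and the Fourier transform of `exp(-b|v|²)` has modulus
`(π/b)^{n/2} exp(-|η|²/(4b))`; with `b = 2|ξ₀|` the constants combine to `(|ξ₀|/(8π))^{n/2}`.
-/

open Complex ComplexConjugate

section GaussianFourier

variable {V : Type*} [NormedAddCommGroup V] [InnerProductSpace ℝ V] [FiniteDimensional ℝ V]
  [MeasurableSpace V] [BorelSpace V]

theorem norm_integral_cexp_neg_mul_sq_norm_add_neg_I_mul_inner {b : ℝ} (hb : 0 < b) (η : V) :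
    ‖∫ v : V, cexp (-b * ‖v‖ ^ 2 + -I * (inner ℝ η v : ℝ))‖ =
      (Real.pi / b) ^ (Module.finrank ℝ V / 2 : ℝ) * Real.exp (-‖η‖ ^ 2 / (4 * b)) := by
  rw [GaussianFourier.integral_cexp_neg_mul_sq_norm_add (by simpa using hb), norm_mul, norm_exp,
    ← ofReal_div, norm_cpow_eq_rpow_re_of_pos (by positivity)]
  have hexponent : ((-I) ^ 2 * ‖η‖ ^ 2 / (4 * b) : ℂ) = ((-‖η‖ ^ 2 / (4 * b) : ℝ) : ℂ) := by
    push_cast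
    rw [neg_sq, I_sq]
    ring
  rw [hexponent, ofReal_re]
  simp

theorem norm_integral_cexp_neg_I_mul_inner_mul_shifted_gaussian {b : ℝ} (hb : 0 < b)
    (η m : V) (K : ℂ) :
    ‖∫ u : V, cexp (-(I * (inner ℝ η u : ℝ))) * (K * cexp (-b * ‖u - m‖ ^ 2))‖ =
      ‖K‖ * ((Real.pi / b) ^ (Module.finrank ℝ V / 2 : ℝ) * Real.exp (-‖η‖ ^ 2 / (4 * b))) := by
  have hsplit : ∀ u : V, cexp (-(I * (inner ℝ η u : ℝ))) * (K * cexp (-b * ‖u - m‖ ^ 2)) =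
      (K * cexp (-(I * (inner ℝ η m : ℝ)))) *
        cexp (-b * ‖u - m‖ ^ 2 + -I * (inner ℝ η (u - m) : ℝ)) := by
    intro u
    rw [mul_left_comm, mul_assoc K, ← exp_add, ← exp_add, inner_sub_right, ofReal_sub]
    ring_nf
  have hphase : ‖cexp (-(I * (inner ℝ η m : ℝ)))‖ = 1 := by
    rw [← mul_neg, ← ofReal_neg, norm_exp_I_mul_ofReal]
  simp_rw [hsplit]
  rw [integral_const_mul,
    integral_sub_right_eq_self (fun v ↦ cexp (-b * ‖v‖ ^ 2 + -I * (inner ℝ η v : ℝ))) m,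
    norm_mul, norm_mul, hphase, mul_one, norm_integral_cexp_neg_mul_sq_norm_add_neg_I_mul_inner hb]

end GaussianFourier

theorem framePsi_mul_conj_framePsi (n : ℕ) (ξ₀ x x' u : EuclideanSpace ℝ (Fin n)) :
    framePsi n ξ₀ (x - u) * conj (framePsi n ξ₀ (x' - u)) =
      ((‖ξ₀‖ / (2 * Real.pi)) ^ n : ℝ) *
        cexp (I * (inner ℝ ξ₀ (x - x') : ℝ) - (‖ξ₀‖ * ‖x - x'‖ ^ 2 / 2 : ℝ)) *
        cexp (-(2 * ‖ξ₀‖ : ℝ) * ‖u - midpoint ℝ x x'‖ ^ 2) := by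
  have hphase : (inner ℝ ξ₀ (x - u) : ℂ) - inner ℝ ξ₀ (x' - u) = inner ℝ ξ₀ (x - x') := by
    rw [← ofReal_sub, ← inner_sub_right, sub_sub_sub_cancel_right]
  have hapollonius : (‖x - u‖ ^ 2 + ‖x' - u‖ ^ 2 : ℂ) =
      2 * ‖u - midpoint ℝ x x'‖ ^ 2 + ‖x - x'‖ ^ 2 / 2 := by
    have := EuclideanGeometry.dist_sq_add_dist_sq_eq_two_mul_dist_midpoint_sq_add_half_dist_sq
      u x x'
    rw [dist_comm u x, dist_comm u x'] at this
    simp only [dist_eq_norm] at this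
    exact_mod_cast (by linear_combination this)
  have hamplitude : ((‖ξ₀‖ / (2 * Real.pi)) ^ ((n : ℝ) / 2)) ^ 2 = (‖ξ₀‖ / (2 * Real.pi)) ^ n := by
    rw [← Real.rpow_natCast _ 2, ← Real.rpow_mul (by positivity)]
    norm_num
  simp only [framePsi, map_mul, conj_ofReal, ← exp_conj, map_sub, conj_I]
  rw [mul_mul_mul_comm, ← exp_add, ← ofReal_mul, ← sq, hamplitude, mul_assoc, ← exp_add]
  congr 2
  push_cast
  linear_combination I * hphase - ‖ξ₀‖ * hapollonius

theorem fourier_of_gaussian_product_general (n : ℕ)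
    (ξ₀ : EuclideanSpace ℝ (Fin n)) (hξ₀ : ξ₀ ≠ 0)
    (x x' η : EuclideanSpace ℝ (Fin n)) :
    ‖∫ u, Complex.exp (-(Complex.I * ((inner ℝ η u : ℝ) : ℂ))) *
        (framePsi n ξ₀ (x - u) * (starRingEnd ℂ) (framePsi n ξ₀ (x' - u)))‖ =
      (‖ξ₀‖ / (8 * Real.pi)) ^ ((n : ℝ) / 2) *
        Real.exp (-‖η‖ ^ 2 / (8 * ‖ξ₀‖) - ‖ξ₀‖ * ‖x - x'‖ ^ 2 / 2) := by
  have ha : 0 < ‖ξ₀‖ := norm_pos_iff.mpr hξ₀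
  simp_rw [framePsi_mul_conj_framePsi]
  rw [norm_integral_cexp_neg_I_mul_inner_mul_shifted_gaussian (by positivity : 0 < 2 * ‖ξ₀‖),
    finrank_euclideanSpace_fin, norm_mul, norm_exp]
  have hamplitude : (‖ξ₀‖ / (2 * Real.pi)) ^ n * (Real.pi / (2 * ‖ξ₀‖)) ^ ((n : ℝ) / 2) =
      (‖ξ₀‖ / (8 * Real.pi)) ^ ((n : ℝ) / 2) := by
    have hsq : (‖ξ₀‖ / (2 * Real.pi)) ^ n = ((‖ξ₀‖ / (2 * Real.pi)) ^ 2) ^ ((n : ℝ) / 2) := by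
      rw [← Real.rpow_natCast _ 2, ← Real.rpow_mul (by positivity), ← Real.rpow_natCast]
      ring_nf
    rw [hsq, ← Real.mul_rpow (by positivity) (by positivity)]
    congr 1
    field_simp
    ring
  simp only [sub_re, mul_re, I_re, I_im, ofReal_re, ofReal_im, zero_mul, mul_zero, zero_sub,
    sub_zero, norm_real,
    Real.norm_of_nonneg (by positivity : 0 ≤ (‖ξ₀‖ / (2 * Real.pi)) ^ n)]
  rw [← hamplitude, sub_eq_add_neg (-‖η‖ ^ 2 / (8 * ‖ξ₀‖)), Real.exp_add]
  ring_nf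

/-- The modulus of the Fourier transform (in the translation variable) of the product of two
translated complex Gaussians, from the proof of Lemma 2. -/
theorem fourier_of_gaussian_product (n : ℕ) (hn : 1 ≤ n)
    (ξ₀ : EuclideanSpace ℝ (Fin n)) (hξ₀ : ξ₀ ≠ 0)
    (x x' η : EuclideanSpace ℝ (Fin n)) :
    ‖∫ u, Complex.exp (-(Complex.I * ((inner ℝ η u : ℝ) : ℂ))) *
        (framePsi n ξ₀ (x - u) * (starRingEnd ℂ) (framePsi n ξ₀ (x' - u)))‖ =
      (‖ξ₀‖ / (8 * Real.pi)) ^ ((n : ℝ) / 2) *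
        Real.exp (-‖η‖ ^ 2 / (8 * ‖ξ₀‖) - ‖ξ₀‖ * ‖x - x'‖ ^ 2 / 2) :=
  fourier_of_gaussian_product_general n ξ₀ hξ₀ x x' η
end

section
/- Let n ≥ 1, let ξ₁, ξ₂ ∈ ℝ^n be nonzero, and let x₁, x₂ ∈ ℝ^n. Then | ∫_{ℝ^n} exp( i(x−x₂)·ξ₂ − i(x−x₁)·ξ₁ − |ξ₂||x−x₂|² − |ξ₁||x−x₁|² ) dx | = (π/(|ξ₁|+|ξ₂|))^{n/2} exp( −|ξ₂−ξ₁|²/(4(|ξ₁|+|ξ₂|)) ) exp( −(|ξ₁||ξ₂|/(|ξ₁|+|ξ₂|)) |x₂−x₁|² ). -/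
/-!
Write `b = a₁ + a₂`. Completing the square,
`a₁‖x - x₁‖² + a₂‖x - x₂‖² = b‖x - m‖² + (a₁a₂/b)‖x₂ - x₁‖²` with `m = (a₁x₁ + a₂x₂)/b`,
while the phase is `⟪ξ₂ - ξ₁, x - m⟫` plus a constant. After translating by `m`, the integral
is the Fourier transform of a Gaussian, `(π/b)^(d/2) exp(-‖ξ₂ - ξ₁‖²/(4b))`, and the constant
phase has modulus one.
-/

open MeasureTheory Complex Module
open scoped RealInnerProductSpace

section
variable {V : Type*} [NormedAddCommGroup V] [InnerProductSpace ℝ V]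

theorem mul_norm_sub_sq_add_mul_norm_sub_sq {a₁ a₂ : ℝ} (h : a₁ + a₂ ≠ 0) (x x₁ x₂ : V) :
    a₁ * ‖x - x₁‖ ^ 2 + a₂ * ‖x - x₂‖ ^ 2 =
      (a₁ + a₂) * ‖x - (a₁ + a₂)⁻¹ • (a₁ • x₁ + a₂ • x₂)‖ ^ 2
        + a₁ * a₂ / (a₁ + a₂) * ‖x₂ - x₁‖ ^ 2 := by
  simp only [← real_inner_self_eq_norm_sq, inner_sub_left, inner_sub_right, inner_add_left,
    inner_add_right, real_inner_smul_left, real_inner_smul_right, real_inner_comm x x₁,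
    real_inner_comm x x₂, real_inner_comm x₁ x₂]
  field_simp
  ring

theorem inner_sub_sub_inner_sub (x x₁ x₂ ξ₁ ξ₂ m : V) :
    ⟪x - x₂, ξ₂⟫ - ⟪x - x₁, ξ₁⟫ = ⟪ξ₂ - ξ₁, x - m⟫ + (⟪m - x₂, ξ₂⟫ - ⟪m - x₁, ξ₁⟫) := by
  simp only [inner_sub_left, inner_sub_right, real_inner_comm ξ₂, real_inner_comm ξ₁]
  ring

variable [FiniteDimensional ℝ V] [MeasurableSpace V] [BorelSpace V]

theorem norm_integral_cexp_neg_mul_sq_norm_sub_add {b : ℝ} (hb : 0 < b) (w m : V) :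
    ‖∫ v : V, cexp (-b * ‖v - m‖ ^ 2 + I * ⟪w, v - m⟫)‖ =
      (Real.pi / b) ^ ((finrank ℝ V : ℝ) / 2) * Real.exp (-‖w‖ ^ 2 / (4 * b)) := by
  rw [integral_sub_right_eq_self (fun v ↦ cexp (-b * ‖v‖ ^ 2 + I * ⟪w, v⟫)) m,
    GaussianFourier.integral_cexp_neg_mul_sq_norm_add (by simpa using hb), norm_mul,
    ← ofReal_div, norm_cpow_eq_rpow_re_of_pos (div_pos Real.pi_pos hb), norm_exp]
  congr 2
  · simp
  · rw [I_sq, neg_one_mul, neg_div, neg_div]; norm_cast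

theorem norm_integral_cexp_two_gaussians {a₁ a₂ : ℝ} (ha : 0 < a₁ + a₂) (ξ₁ ξ₂ x₁ x₂ : V) :
    ‖∫ x : V, cexp (I * ((⟪x - x₂, ξ₂⟫ : ℝ) : ℂ) - I * ((⟪x - x₁, ξ₁⟫ : ℝ) : ℂ)
        - ((a₂ * ‖x - x₂‖ ^ 2 : ℝ) : ℂ) - ((a₁ * ‖x - x₁‖ ^ 2 : ℝ) : ℂ))‖ =
      (Real.pi / (a₁ + a₂)) ^ ((finrank ℝ V : ℝ) / 2) *
        Real.exp (-‖ξ₂ - ξ₁‖ ^ 2 / (4 * (a₁ + a₂))) *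
        Real.exp (-(a₁ * a₂ / (a₁ + a₂)) * ‖x₂ - x₁‖ ^ 2) := by
  set m : V := (a₁ + a₂)⁻¹ • (a₁ • x₁ + a₂ • x₂)
  set θ : ℝ := ⟪m - x₂, ξ₂⟫ - ⟪m - x₁, ξ₁⟫
  have h_exponent : ∀ x : V,
      I * ((⟪x - x₂, ξ₂⟫ : ℝ) : ℂ) - I * ((⟪x - x₁, ξ₁⟫ : ℝ) : ℂ)
          - ((a₂ * ‖x - x₂‖ ^ 2 : ℝ) : ℂ) - ((a₁ * ‖x - x₁‖ ^ 2 : ℝ) : ℂ) =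
        (-((a₁ + a₂ : ℝ) : ℂ) * ‖x - m‖ ^ 2 + I * ⟪ξ₂ - ξ₁, x - m⟫)
          + (I * θ - ((a₁ * a₂ / (a₁ + a₂) * ‖x₂ - x₁‖ ^ 2 : ℝ) : ℂ)) := by
    intro x
    have h_phase := inner_sub_sub_inner_sub x x₁ x₂ ξ₁ ξ₂ m
    have h_square := mul_norm_sub_sq_add_mul_norm_sub_sq ha.ne' x x₁ x₂
    apply_fun ((↑) : ℝ → ℂ) at h_phase h_square
    push_cast [θ] at h_phase h_square ⊢
    linear_combination I * h_phase - h_square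
  simp_rw [h_exponent, exp_add _ (I * θ - _)]
  rw [integral_mul_const, norm_mul, norm_integral_cexp_neg_mul_sq_norm_sub_add ha, norm_exp]
  congr 2
  simp only [sub_re, mul_re, I_re, I_im, ofReal_re, ofReal_im, zero_mul, one_mul, zero_sub,
    sub_zero, neg_mul]

end

theorem gaussian_inner_product_modulus_general (n : ℕ)
    (ξ₁ ξ₂ : EuclideanSpace ℝ (Fin n)) (hξ₁ : ξ₁ ≠ 0) (hξ₂ : ξ₂ ≠ 0)
    (x₁ x₂ : EuclideanSpace ℝ (Fin n)) :
    ‖∫ x, Complex.exp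
        (Complex.I * ((inner ℝ (x - x₂) ξ₂ : ℝ) : ℂ) - Complex.I * ((inner ℝ (x - x₁) ξ₁ : ℝ) : ℂ)
          - ((‖ξ₂‖ * ‖x - x₂‖ ^ 2 : ℝ) : ℂ) - ((‖ξ₁‖ * ‖x - x₁‖ ^ 2 : ℝ) : ℂ))‖ =
      (Real.pi / (‖ξ₁‖ + ‖ξ₂‖)) ^ ((n : ℝ) / 2) *
        Real.exp (-‖ξ₂ - ξ₁‖ ^ 2 / (4 * (‖ξ₁‖ + ‖ξ₂‖))) *
        Real.exp (-(‖ξ₁‖ * ‖ξ₂‖ / (‖ξ₁‖ + ‖ξ₂‖)) * ‖x₂ - x₁‖ ^ 2) := by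
  simpa only [finrank_euclideanSpace_fin] using
    norm_integral_cexp_two_gaussians (add_pos (norm_pos_iff.2 hξ₁) (norm_pos_iff.2 hξ₂))
      ξ₁ ξ₂ x₁ x₂

/-- The exact modulus of the inner product of two complex Gaussian frame functions (without
normalizing prefactors), from Section 2 of the paper. -/
theorem gaussian_inner_product_modulus (n : ℕ) (hn : 1 ≤ n)
    (ξ₁ ξ₂ : EuclideanSpace ℝ (Fin n)) (hξ₁ : ξ₁ ≠ 0) (hξ₂ : ξ₂ ≠ 0)
    (x₁ x₂ : EuclideanSpace ℝ (Fin n)) :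
    ‖∫ x, Complex.exp
        (Complex.I * ((inner ℝ (x - x₂) ξ₂ : ℝ) : ℂ) - Complex.I * ((inner ℝ (x - x₁) ξ₁ : ℝ) : ℂ)
          - ((‖ξ₂‖ * ‖x - x₂‖ ^ 2 : ℝ) : ℂ) - ((‖ξ₁‖ * ‖x - x₁‖ ^ 2 : ℝ) : ℂ))‖ =
      (Real.pi / (‖ξ₁‖ + ‖ξ₂‖)) ^ ((n : ℝ) / 2) *
        Real.exp (-‖ξ₂ - ξ₁‖ ^ 2 / (4 * (‖ξ₁‖ + ‖ξ₂‖))) *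
        Real.exp (-(‖ξ₁‖ * ‖ξ₂‖ / (‖ξ₁‖ + ‖ξ₂‖)) * ‖x₂ - x₁‖ ^ 2) :=
  gaussian_inner_product_modulus_general n ξ₁ ξ₂ hξ₁ hξ₂ x₁ x₂
end

section
/- Let n ≥ 1. There exists a constant C depending only on n such that for all nonzero ξ₁, ξ₂ ∈ ℝ^n and all x₁, x₂ ∈ ℝ^n: | ∫_{ℝ^n} |ξ₂|² |x−x₂|² exp( i(x−x₂)·ξ₂ − i(x−x₁)·ξ₁ − |ξ₂||x−x₂|² − |ξ₁||x−x₁|² ) dx | ≤ C (π/(|ξ₁|+|ξ₂|))^{n/2} ( |ξ₁−ξ₂|² + |ξ₁||ξ₂||x₁−x₂|² + |ξ₂| ) × exp( −|ξ₂−ξ₁|²/(4(|ξ₁|+|ξ₂|)) ) exp( −(|ξ₁||ξ₂|/(|ξ₁|+|ξ₂|)) |x₂−x₁|² ). -/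
/-!
Substituting `y = x - x₂`, the integrand becomes `|ξ₂|² e^d · |y|² exp(-p|y|² + ⟪u + iδ, y⟫)` with
`p = |ξ₁| + |ξ₂|`, `u = -2|ξ₁|(x₂ - x₁)`, `δ = ξ₂ - ξ₁` and `Re d = -|ξ₁||x₂ - x₁|²`. This Gaussian
moment factors over coordinates, and in one variable integrating `d/dt (tᵏ e^{-bt² + ct}) = 0` for
`k = 0, 1` expresses the second moment through the zeroth. The exact value is
`(S/(4p²) + n/(2p)) (π/p)^{n/2} e^{S/(4p)}` with `S = (u + iδ)·(u + iδ)`. Since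
`Re S = |u|² - |δ|²`, the oscillation in `δ` becomes the decay `e^{-|δ|²/(4p)}` and, together with
`e^d`, the factor `e^{-(|ξ₁||ξ₂|/p)|x₂ - x₁|²}`, while `|S| ≤ |u|² + |δ|²` bounds the prefactor.
-/

open MeasureTheory Complex GaussianFourier
open scoped Real RealInnerProductSpace

lemma neg_mul_sq_add_mul_le {β : ℝ} (hβ : 0 < β) (γ t : ℝ) :
    -β * t ^ 2 + γ * t ≤ -(β / 2) * t ^ 2 + γ ^ 2 / (2 * β) := by
  have h : -(β / 2) * t ^ 2 + γ ^ 2 / (2 * β) - (-β * t ^ 2 + γ * t) =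
      (β * t - γ) ^ 2 / (2 * β) := by
    field_simp; ring
  linarith [div_nonneg (sq_nonneg (β * t - γ)) (by positivity : (0 : ℝ) ≤ 2 * β)]

lemma integrable_pow_mul_cexp_quadratic {b : ℂ} (hb : 0 < b.re) (c : ℂ) (k : ℕ) :
    Integrable fun t : ℝ => (t : ℂ) ^ k * cexp (-b * t ^ 2 + c * t) := by
  have hdom := ((integrable_rpow_mul_exp_neg_mul_sq (half_pos hb)
    (by linarith [k.cast_nonneg (α := ℝ)] : (-1 : ℝ) < k)).norm.const_mul
      (Real.exp (c.re ^ 2 / (2 * b.re))))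
  refine hdom.mono' (by fun_prop) (ae_of_all _ fun t => ?_)
  have hre : (-b * t ^ 2 + c * t).re = -b.re * t ^ 2 + c.re * t := by
    simp [← ofReal_pow]
  rw [norm_mul, norm_exp, hre, norm_pow, norm_real, Real.norm_eq_abs, Real.norm_eq_abs,
    Real.rpow_natCast, abs_mul, abs_pow, abs_of_pos (Real.exp_pos _), mul_left_comm,
    ← Real.exp_add]
  refine mul_le_mul_of_nonneg_left (Real.exp_le_exp.2 ?_) (by positivity)
  linarith [neg_mul_sq_add_mul_le hb c.re t]

lemma hasDerivAt_pow_mul_cexp_quadratic (b c : ℂ) (k : ℕ) (t : ℝ) :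
    HasDerivAt (fun t : ℝ => (t : ℂ) ^ k * cexp (-b * t ^ 2 + c * t))
      (k * ((t : ℂ) ^ (k - 1) * cexp (-b * t ^ 2 + c * t))
        + c * ((t : ℂ) ^ k * cexp (-b * t ^ 2 + c * t))
        - 2 * b * ((t : ℂ) ^ (k + 1) * cexp (-b * t ^ 2 + c * t))) t := by
  have hexp : HasDerivAt (fun z : ℂ => cexp (-b * z ^ 2 + c * z))
      ((-b * (2 * t) + c) * cexp (-b * t ^ 2 + c * t)) t := by
    simpa [mul_comm] using
      (((hasDerivAt_pow 2 (t : ℂ)).const_mul (-b)).add ((hasDerivAt_id (t : ℂ)).const_mul c)).cexp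
  have hprod : HasDerivAt (fun z : ℂ => z ^ k * cexp (-b * z ^ 2 + c * z)) _ t :=
    (hasDerivAt_pow k (t : ℂ)).mul hexp
  convert hprod.comp_ofReal using 1
  ring

lemma two_mul_integral_pow_succ_mul_cexp_quadratic {b : ℂ} (hb : 0 < b.re) (c : ℂ) (k : ℕ) :
    2 * b * ∫ t : ℝ, (t : ℂ) ^ (k + 1) * cexp (-b * t ^ 2 + c * t) =
      c * (∫ t : ℝ, (t : ℂ) ^ k * cexp (-b * t ^ 2 + c * t))
        + k * ∫ t : ℝ, (t : ℂ) ^ (k - 1) * cexp (-b * t ^ 2 + c * t) := by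
  have I := integrable_pow_mul_cexp_quadratic hb c
  have h := integral_eq_zero_of_hasDerivAt_of_integrable
    (hasDerivAt_pow_mul_cexp_quadratic b c k)
    ((((I (k - 1)).const_mul _).add ((I k).const_mul c)).sub ((I (k + 1)).const_mul (2 * b))) (I k)
  rw [integral_sub (by exact ((I _).const_mul _).add ((I _).const_mul _)) ((I _).const_mul _),
    integral_add ((I _).const_mul _) ((I _).const_mul _), integral_const_mul,
    integral_const_mul, integral_const_mul] at h
  linear_combination -h

lemma integral_sq_mul_cexp_quadratic {b : ℂ} (hb : 0 < b.re) (c : ℂ) :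
    ∫ t : ℝ, (t : ℂ) ^ 2 * cexp (-b * t ^ 2 + c * t) =
      (c ^ 2 / (4 * b ^ 2) + 1 / (2 * b)) * ∫ t : ℝ, cexp (-b * t ^ 2 + c * t) := by
  have hb0 : b ≠ 0 := by rintro rfl; simp at hb
  have h₀ := two_mul_integral_pow_succ_mul_cexp_quadratic hb c 0
  have h₁ := two_mul_integral_pow_succ_mul_cexp_quadratic hb c 1
  simp only [zero_add, one_add_one_eq_two, pow_zero, pow_one, one_mul, Nat.cast_zero,
    Nat.cast_one, zero_mul, add_zero, tsub_self] at h₀ h₁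
  generalize ∫ t : ℝ, cexp (-b * t ^ 2 + c * t) = M₀ at *
  generalize ∫ t : ℝ, (t : ℂ) * cexp (-b * t ^ 2 + c * t) = M₁ at *
  generalize ∫ t : ℝ, (t : ℂ) ^ 2 * cexp (-b * t ^ 2 + c * t) = M₂ at *
  field_simp
  linear_combination (4 * b) * h₁ + (2 * c) * h₀

section InnerProductSpace

variable {V : Type*} [NormedAddCommGroup V] [InnerProductSpace ℝ V]

/-- `(u + i w) · (u + i w)` for the complex-bilinear extension of the inner product. -/
def complexDotSelf (u w : V) : ℂ := (‖u‖ : ℂ) ^ 2 - ‖w‖ ^ 2 + 2 * I * ⟪u, w⟫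

lemma re_complexDotSelf (u w : V) : (complexDotSelf u w).re = ‖u‖ ^ 2 - ‖w‖ ^ 2 := by
  simp [complexDotSelf, ← ofReal_pow]

lemma norm_complexDotSelf_le (u w : V) : ‖complexDotSelf u w‖ ≤ ‖u‖ ^ 2 + ‖w‖ ^ 2 := by
  have h : complexDotSelf u w = ((‖u‖ ^ 2 - ‖w‖ ^ 2 : ℝ) : ℂ) + ((2 * ⟪u, w⟫ : ℝ) : ℂ) * I := by
    push_cast [complexDotSelf]; ring
  rw [h, norm_add_mul_I, Real.sqrt_le_left (by positivity)]
  nlinarith [abs_real_inner_le_norm u w, abs_nonneg ⟪u, w⟫, sq_abs ⟪u, w⟫,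
    mul_nonneg (norm_nonneg u) (norm_nonneg w)]

lemma bT_exponent_eq (a b : ℝ) (ξ₁ ξ₂ x₁ x₂ x : V) :
    I * ⟪x - x₂, ξ₂⟫ - I * ⟪x - x₁, ξ₁⟫ - ((b * ‖x - x₂‖ ^ 2 : ℝ) : ℂ)
        - ((a * ‖x - x₁‖ ^ 2 : ℝ) : ℂ) =
      (-(a + b : ℝ) * ‖x - x₂‖ ^ 2 + ⟪-(2 * a) • (x₂ - x₁), x - x₂⟫ + I * ⟪ξ₂ - ξ₁, x - x₂⟫)
        + (-(a * ‖x₂ - x₁‖ ^ 2 : ℝ) - I * ⟪x₂ - x₁, ξ₁⟫) := by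
  have hx : x - x₁ = (x - x₂) + (x₂ - x₁) := by abel
  have hre : -(b * ‖x - x₂‖ ^ 2) - a * ‖x - x₁‖ ^ 2 =
      -(a + b) * ‖x - x₂‖ ^ 2 + ⟪-(2 * a) • (x₂ - x₁), x - x₂⟫ - a * ‖x₂ - x₁‖ ^ 2 := by
    rw [hx, norm_add_sq_real, real_inner_smul_left, real_inner_comm]; ring
  have him : ⟪x - x₂, ξ₂⟫ - ⟪x - x₁, ξ₁⟫ = ⟪ξ₂ - ξ₁, x - x₂⟫ - ⟪x₂ - x₁, ξ₁⟫ := by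
    rw [hx, inner_add_left, inner_sub_left ξ₂, real_inner_comm ξ₂, real_inner_comm ξ₁]; ring
  have hre' := congrArg (fun r : ℝ => (r : ℂ)) hre
  have him' := congrArg (fun r : ℝ => (r : ℂ)) him
  push_cast at hre' him' ⊢
  linear_combination hre' + I * him'

lemma integral_bT_eq [MeasurableSpace V] [BorelSpace V] (μ : Measure V)
    [μ.IsAddRightInvariant] (a b : ℝ) (ξ₁ ξ₂ x₁ x₂ : V) :
    ∫ x, ((b ^ 2 * ‖x - x₂‖ ^ 2 : ℝ) : ℂ) * cexp (I * ⟪x - x₂, ξ₂⟫ - I * ⟪x - x₁, ξ₁⟫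
        - ((b * ‖x - x₂‖ ^ 2 : ℝ) : ℂ) - ((a * ‖x - x₁‖ ^ 2 : ℝ) : ℂ)) ∂μ =
      ((b ^ 2 : ℝ) : ℂ) * cexp (-(a * ‖x₂ - x₁‖ ^ 2 : ℝ) - I * ⟪x₂ - x₁, ξ₁⟫) *
        ∫ y, (‖y‖ : ℂ) ^ 2 *
          cexp (-(a + b : ℝ) * ‖y‖ ^ 2 + ⟪-(2 * a) • (x₂ - x₁), y⟫ + I * ⟪ξ₂ - ξ₁, y⟫) ∂μ := by
  conv_rhs => rw [← integral_sub_right_eq_self _ x₂, ← integral_const_mul]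
  congr 1 with x
  rw [bT_exponent_eq, Complex.exp_add]
  push_cast
  ring

end InnerProductSpace

section Coordinates

variable {ι : Type*} [Fintype ι]

lemma prod_pow_mul_cexp_neg_mul_sum_add (b : ℂ) (c : ι → ℂ) (k : ι → ℕ) (v : ι → ℝ) :
    (∏ i, (v i : ℂ) ^ k i) * cexp (-b * ∑ i, (v i : ℂ) ^ 2 + ∑ i, c i * v i) =
      ∏ i, (v i : ℂ) ^ k i * cexp (-b * (v i) ^ 2 + c i * v i) := by
  rw [Finset.prod_mul_distrib, ← Complex.exp_sum, Finset.sum_add_distrib, Finset.mul_sum]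

lemma integrable_prod_pow_mul_cexp_neg_mul_sum_add {b : ℂ} (hb : 0 < b.re) (c : ι → ℂ)
    (k : ι → ℕ) :
    Integrable fun v : ι → ℝ =>
      (∏ i, (v i : ℂ) ^ k i) * cexp (-b * ∑ i, (v i : ℂ) ^ 2 + ∑ i, c i * v i) := by
  simp_rw [prod_pow_mul_cexp_neg_mul_sum_add]
  exact Integrable.fintype_prod fun i => integrable_pow_mul_cexp_quadratic hb (c i) (k i)

lemma integral_prod_pow_mul_cexp_neg_mul_sum_add (b : ℂ) (c : ι → ℂ) (k : ι → ℕ) :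
    ∫ v : ι → ℝ, (∏ i, (v i : ℂ) ^ k i) * cexp (-b * ∑ i, (v i : ℂ) ^ 2 + ∑ i, c i * v i) =
      ∏ i, ∫ t : ℝ, (t : ℂ) ^ k i * cexp (-b * t ^ 2 + c i * t) := by
  simp_rw [prod_pow_mul_cexp_neg_mul_sum_add]
  exact integral_fintype_prod_volume_eq_prod
    (fun i (t : ℝ) => (t : ℂ) ^ k i * cexp (-b * t ^ 2 + c i * t))

lemma Fintype.prod_pow_piSingle {M : Type*} [CommMonoid M] [DecidableEq ι] (x : ι → M) (j : ι)
    (k : ℕ) : ∏ i, x i ^ (Pi.single j k : ι → ℕ) i = x j ^ k := by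
  simp [Pi.single_apply, pow_ite]

lemma integral_sq_mul_cexp_neg_mul_sum_add [DecidableEq ι] {b : ℂ} (hb : 0 < b.re)
    (c : ι → ℂ) (j : ι) :
    ∫ v : ι → ℝ, (v j : ℂ) ^ 2 * cexp (-b * ∑ i, (v i : ℂ) ^ 2 + ∑ i, c i * v i) =
      (c j ^ 2 / (4 * b ^ 2) + 1 / (2 * b)) *
        ∫ v : ι → ℝ, cexp (-b * ∑ i, (v i : ℂ) ^ 2 + ∑ i, c i * v i) := by
  have hfactor (i : ι) :
      ∫ t : ℝ, (t : ℂ) ^ (Pi.single j 2 : ι → ℕ) i * cexp (-b * t ^ 2 + c i * t) =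
        (if i = j then c j ^ 2 / (4 * b ^ 2) + 1 / (2 * b) else 1) *
          ∫ t : ℝ, cexp (-b * t ^ 2 + c i * t) := by
    split_ifs with h
    · subst h; simpa using integral_sq_mul_cexp_quadratic hb (c i)
    · simp [Pi.single_eq_of_ne h]
  have h₂ := integral_prod_pow_mul_cexp_neg_mul_sum_add b c (Pi.single j 2)
  have h₀ := integral_prod_pow_mul_cexp_neg_mul_sum_add b c 0
  simp only [Fintype.prod_pow_piSingle] at h₂
  simp only [Pi.zero_apply, pow_zero, Finset.prod_const_one, one_mul] at h₀
  rw [h₂, h₀, Finset.prod_congr rfl fun i _ => hfactor i, Finset.prod_mul_distrib,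
    Finset.prod_ite_eq', if_pos (Finset.mem_univ j)]

lemma integral_sum_sq_mul_cexp_neg_mul_sum_add {b : ℂ} (hb : 0 < b.re) (c : ι → ℂ) :
    ∫ v : ι → ℝ, (∑ j, (v j : ℂ) ^ 2) * cexp (-b * ∑ i, (v i : ℂ) ^ 2 + ∑ i, c i * v i) =
      ((∑ i, c i ^ 2) / (4 * b ^ 2) + Fintype.card ι / (2 * b)) *
        ((π / b) ^ (Fintype.card ι / 2 : ℂ) * cexp ((∑ i, c i ^ 2) / (4 * b))) := by
  classical
  simp_rw [Finset.sum_mul]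
  rw [integral_finsetSum _ fun j _ => by
      simpa only [Fintype.prod_pow_piSingle] using
        integrable_prod_pow_mul_cexp_neg_mul_sum_add hb c (Pi.single j 2)]
  simp_rw [integral_sq_mul_cexp_neg_mul_sum_add hb, ← Finset.sum_mul,
    integral_cexp_neg_mul_sum_add hb]
  rw [Finset.sum_add_distrib, ← Finset.sum_div, Finset.sum_const, Finset.card_univ, nsmul_eq_mul]
  ring

lemma integral_sq_norm_mul_cexp_neg_mul_sq_norm_add {b : ℂ} (hb : 0 < b.re)
    (u w : EuclideanSpace ℝ ι) :
    ∫ y : EuclideanSpace ℝ ι, (‖y‖ : ℂ) ^ 2 * cexp (-b * ‖y‖ ^ 2 + ⟪u, y⟫ + I * ⟪w, y⟫) =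
      (complexDotSelf u w / (4 * b ^ 2) + Fintype.card ι / (2 * b)) *
        ((π / b) ^ (Fintype.card ι / 2 : ℂ) * cexp (complexDotSelf u w / (4 * b))) := by
  have hnorm (y : EuclideanSpace ℝ ι) : (‖y‖ : ℂ) ^ 2 = ∑ i, (y i : ℂ) ^ 2 := by
    exact_mod_cast EuclideanSpace.real_norm_sq_eq y
  have hinner (x y : EuclideanSpace ℝ ι) : (⟪x, y⟫ : ℂ) = ∑ i, (x i : ℂ) * y i := by
    simp [PiLp.inner_apply, mul_comm]
  have hS : ∑ i, ((u i : ℂ) + I * w i) ^ 2 = complexDotSelf u w := by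
    rw [complexDotSelf, hnorm, hnorm, hinner, Finset.mul_sum, ← Finset.sum_sub_distrib,
      ← Finset.sum_add_distrib]
    refine Finset.sum_congr rfl fun i _ => ?_
    linear_combination (w i : ℂ) ^ 2 * I_sq
  rw [← hS, ← integral_sum_sq_mul_cexp_neg_mul_sum_add hb,
    ← (PiLp.volume_preserving_toLp ι).integral_comp (MeasurableEquiv.toLp 2 _).measurableEmbedding]
  congr 1 with v
  simp only [hnorm, hinner, add_mul, Finset.sum_add_distrib, Finset.mul_sum, mul_assoc]
  rw [add_assoc]

lemma norm_integral_sq_norm_mul_cexp_le {p : ℝ} (hp : 0 < p) (u w : EuclideanSpace ℝ ι) :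
    ‖∫ y : EuclideanSpace ℝ ι, (‖y‖ : ℂ) ^ 2 * cexp (-(p : ℂ) * ‖y‖ ^ 2 + ⟪u, y⟫ + I * ⟪w, y⟫)‖ ≤
      ((‖u‖ ^ 2 + ‖w‖ ^ 2) / (4 * p ^ 2) + Fintype.card ι / (2 * p)) *
        ((π / p) ^ (Fintype.card ι / 2 : ℝ) * Real.exp ((‖u‖ ^ 2 - ‖w‖ ^ 2) / (4 * p))) := by
  have hre : (complexDotSelf u w / (4 * p)).re = (‖u‖ ^ 2 - ‖w‖ ^ 2) / (4 * p) := by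
    rw [← re_complexDotSelf, ← div_ofReal_re]
    push_cast
    rfl
  have hprefactor : ‖complexDotSelf u w / (4 * p ^ 2) + Fintype.card ι / (2 * p)‖ ≤
      (‖u‖ ^ 2 + ‖w‖ ^ 2) / (4 * p ^ 2) + Fintype.card ι / (2 * p) := by
    refine (norm_add_le _ _).trans ?_
    simp only [norm_div, norm_mul, norm_pow, norm_real, Real.norm_eq_abs, abs_of_pos hp,
      Complex.norm_natCast, Complex.norm_ofNat]
    gcongr
    exact norm_complexDotSelf_le u w
  rw [integral_sq_norm_mul_cexp_neg_mul_sq_norm_add (by simpa using hp), norm_mul, norm_mul,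
    norm_exp, hre, ← ofReal_div, norm_cpow_eq_rpow_re_of_pos (by positivity), div_ofNat_re,
    natCast_re]
  gcongr

end Coordinates

lemma exp_neg_mul_mul_exp_div_eq {a b : ℝ} (hab : a + b ≠ 0) (D E : ℝ) :
    Real.exp (-(a * E)) * Real.exp ((4 * a ^ 2 * E - D) / (4 * (a + b))) =
      Real.exp (-D / (4 * (a + b))) * Real.exp (-(a * b / (a + b)) * E) := by
  rw [← Real.exp_add, ← Real.exp_add]
  congr 1
  field_simp
  ring

lemma bT_prefactor_le {a b : ℝ} (ha : 0 < a) (hb : 0 < b) {D E : ℝ} (hD : 0 ≤ D)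
    (hE : 0 ≤ E) (n : ℕ) :
    b ^ 2 * ((4 * a ^ 2 * E + D) / (4 * (a + b) ^ 2) + n / (2 * (a + b))) ≤
      (n + 1) * (D + a * b * E + b) := by
  have hp : 0 < a + b := by positivity
  have hb_le : b ≤ a + b := by linarith
  have hab : 4 * (a * b) ≤ (a + b) ^ 2 := by nlinarith [sq_nonneg (a - b)]
  have h₁ : b ^ 2 * (4 * a ^ 2 * E) / (4 * (a + b) ^ 2) ≤ a * b * E := by
    rw [div_le_iff₀ (by positivity)]
    nlinarith [mul_le_mul_of_nonneg_left hab (by positivity : 0 ≤ a * b * E),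
      mul_nonneg (by positivity : 0 ≤ a * b * E) (sq_nonneg (a + b))]
  have h₂ : b ^ 2 * D / (4 * (a + b) ^ 2) ≤ D := by
    rw [div_le_iff₀ (by positivity)]
    nlinarith [mul_le_mul_of_nonneg_left (pow_le_pow_left₀ hb.le hb_le 2) hD]
  have h₃ : b ^ 2 * n / (2 * (a + b)) ≤ n * b := by
    rw [div_le_iff₀ (by positivity)]
    nlinarith [mul_le_mul_of_nonneg_left hb_le (by positivity : (0 : ℝ) ≤ n * b)]
  calc b ^ 2 * ((4 * a ^ 2 * E + D) / (4 * (a + b) ^ 2) + n / (2 * (a + b)))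
      = b ^ 2 * (4 * a ^ 2 * E) / (4 * (a + b) ^ 2) + b ^ 2 * D / (4 * (a + b) ^ 2)
          + b ^ 2 * n / (2 * (a + b)) := by ring
    _ ≤ a * b * E + D + n * b := by linarith
    _ ≤ (n + 1) * (D + a * b * E + b) := by
      nlinarith [mul_nonneg n.cast_nonneg hD,
        mul_nonneg n.cast_nonneg (by positivity : 0 ≤ a * b * E)]

lemma bT_envelope_le {a b : ℝ} (ha : 0 < a) (hb : 0 < b) {D E : ℝ} (hD : 0 ≤ D) (hE : 0 ≤ E)
    (n : ℕ) :
    b ^ 2 * Real.exp (-(a * E)) * (((4 * a ^ 2 * E + D) / (4 * (a + b) ^ 2) + n / (2 * (a + b)))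
        * ((π / (a + b)) ^ ((n : ℝ) / 2) * Real.exp ((4 * a ^ 2 * E - D) / (4 * (a + b))))) ≤
      (n + 1) * (π / (a + b)) ^ ((n : ℝ) / 2) * (D + a * b * E + b) *
        Real.exp (-D / (4 * (a + b))) * Real.exp (-(a * b / (a + b)) * E) := by
  calc _ = b ^ 2 * ((4 * a ^ 2 * E + D) / (4 * (a + b) ^ 2) + n / (2 * (a + b)))
          * (π / (a + b)) ^ ((n : ℝ) / 2)
          * (Real.exp (-(a * E)) * Real.exp ((4 * a ^ 2 * E - D) / (4 * (a + b)))) := by ring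
    _ ≤ (n + 1) * (D + a * b * E + b) * (π / (a + b)) ^ ((n : ℝ) / 2)
          * (Real.exp (-(a * E)) * Real.exp ((4 * a ^ 2 * E - D) / (4 * (a + b)))) := by
        gcongr ?_ * _ * _
        exact bT_prefactor_le ha hb hD hE n
    _ = _ := by rw [exp_neg_mul_mul_exp_div_eq (by positivity)]; ring

theorem gaussian_bT_bound_general (n : ℕ) :
    ∃ C : ℝ, 0 < C ∧
      ∀ (ξ₁ ξ₂ : EuclideanSpace ℝ (Fin n)), ξ₁ ≠ 0 → ξ₂ ≠ 0 →
        ∀ x₁ x₂ : EuclideanSpace ℝ (Fin n),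
          ‖∫ x, ((‖ξ₂‖ ^ 2 * ‖x - x₂‖ ^ 2 : ℝ) : ℂ) * Complex.exp
              (Complex.I * ((inner ℝ (x - x₂) ξ₂ : ℝ) : ℂ)
                - Complex.I * ((inner ℝ (x - x₁) ξ₁ : ℝ) : ℂ)
                - ((‖ξ₂‖ * ‖x - x₂‖ ^ 2 : ℝ) : ℂ) - ((‖ξ₁‖ * ‖x - x₁‖ ^ 2 : ℝ) : ℂ))‖ ≤
            C * (Real.pi / (‖ξ₁‖ + ‖ξ₂‖)) ^ ((n : ℝ) / 2) *
              (‖ξ₁ - ξ₂‖ ^ 2 + ‖ξ₁‖ * ‖ξ₂‖ * ‖x₁ - x₂‖ ^ 2 + ‖ξ₂‖) *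
              Real.exp (-‖ξ₂ - ξ₁‖ ^ 2 / (4 * (‖ξ₁‖ + ‖ξ₂‖))) *
              Real.exp (-(‖ξ₁‖ * ‖ξ₂‖ / (‖ξ₁‖ + ‖ξ₂‖)) * ‖x₂ - x₁‖ ^ 2) := by
  refine ⟨n + 1, by positivity, fun ξ₁ ξ₂ hξ₁ hξ₂ x₁ x₂ => ?_⟩
  have ha : 0 < ‖ξ₁‖ := norm_pos_iff.2 hξ₁
  have hb : 0 < ‖ξ₂‖ := norm_pos_iff.2 hξ₂
  have hu : ‖-(2 * ‖ξ₁‖) • (x₂ - x₁)‖ ^ 2 = 4 * ‖ξ₁‖ ^ 2 * ‖x₂ - x₁‖ ^ 2 := by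
    rw [norm_smul, norm_neg, Real.norm_of_nonneg (by positivity)]; ring
  have hJ := norm_integral_sq_norm_mul_cexp_le (add_pos ha hb) (-(2 * ‖ξ₁‖) • (x₂ - x₁)) (ξ₂ - ξ₁)
  rw [hu, Fintype.card_fin] at hJ
  rw [integral_bT_eq, norm_mul, norm_mul, norm_exp, norm_real,
    Real.norm_of_nonneg (by positivity), norm_sub_rev ξ₁, norm_sub_rev x₁]
  simp only [sub_re, neg_re, ofReal_re, I_mul_re, ofReal_im, neg_zero, sub_zero]
  exact (mul_le_mul_of_nonneg_left hJ (by positivity)).trans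
    (bT_envelope_le ha hb (by positivity) (by positivity) n)

/-- The bound on the leading-order matrix entries `b_T(γ,γ',t)` from Section 2 of the paper
(without normalizing prefactors). -/
theorem gaussian_bT_bound (n : ℕ) (hn : 1 ≤ n) :
    ∃ C : ℝ, 0 < C ∧
      ∀ (ξ₁ ξ₂ : EuclideanSpace ℝ (Fin n)), ξ₁ ≠ 0 → ξ₂ ≠ 0 →
        ∀ x₁ x₂ : EuclideanSpace ℝ (Fin n),
          ‖∫ x, ((‖ξ₂‖ ^ 2 * ‖x - x₂‖ ^ 2 : ℝ) : ℂ) * Complex.exp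
              (Complex.I * ((inner ℝ (x - x₂) ξ₂ : ℝ) : ℂ)
                - Complex.I * ((inner ℝ (x - x₁) ξ₁ : ℝ) : ℂ)
                - ((‖ξ₂‖ * ‖x - x₂‖ ^ 2 : ℝ) : ℂ) - ((‖ξ₁‖ * ‖x - x₁‖ ^ 2 : ℝ) : ℂ))‖ ≤
            C * (Real.pi / (‖ξ₁‖ + ‖ξ₂‖)) ^ ((n : ℝ) / 2) *
              (‖ξ₁ - ξ₂‖ ^ 2 + ‖ξ₁‖ * ‖ξ₂‖ * ‖x₁ - x₂‖ ^ 2 + ‖ξ₂‖) *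
              Real.exp (-‖ξ₂ - ξ₁‖ ^ 2 / (4 * (‖ξ₁‖ + ‖ξ₂‖))) *
              Real.exp (-(‖ξ₁‖ * ‖ξ₂‖ / (‖ξ₁‖ + ‖ξ₂‖)) * ‖x₂ - x₁‖ ^ 2) :=
  gaussian_bT_bound_general n
end

section
/- Let n ≥ 1, let λ ≥ 1 be real, and let ε₀ ∈ ℝ^n. Then Σ_{α∈ℤ^n} exp( −|α−ε₀|²/λ ) ≤ (2πλ)^{n/2}. -/
/-!
The exponent `‖α - ε₀‖²` splits over the coordinates, so the lattice sum is a product of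
one-dimensional sums `S(t) = ∑ₖ exp(-(k - t)² / λ)`. Jacobi's transformation (Poisson summation)
gives `S(t) = √(πλ) ∑ₖ exp(-π²λk²) e^{2πikt} ≤ √(πλ) ∑ₖ exp(-ck²)` with `c = π²λ ≥ 9`, and comparing
with the geometric series `∑ₖ exp(-c)^|k|` bounds the last sum by `11/9 ≤ √2`.
-/

open Real

lemma hasSum_pow_natAbs {r : ℝ} (h0 : 0 ≤ r) (h1 : r < 1) :
    HasSum (fun k : ℤ => r ^ k.natAbs) ((1 + r) / (1 - r)) := by
  have hpos := hasSum_geometric_of_lt_one h0 h1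
  have hneg : HasSum (fun n : ℕ => r ^ (-((n : ℤ) + 1)).natAbs) (r * (1 - r)⁻¹) := by
    have : (fun n : ℕ => r ^ (-((n : ℤ) + 1)).natAbs) = fun n => r * r ^ n := by
      funext n
      rw [← pow_succ']
      congr 1
    exact this ▸ hpos.mul_left r
  have h1r : 1 - r ≠ 0 := (sub_pos.mpr h1).ne'
  rw [show (1 + r) / (1 - r) = (1 - r)⁻¹ + r * (1 - r)⁻¹ by field_simp]
  exact hpos.of_nat_of_neg_add_one hneg

lemma exp_neg_mul_sq_le_pow_natAbs {c : ℝ} (hc : 0 ≤ c) (k : ℤ) :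
    rexp (-c * k ^ 2) ≤ rexp (-c) ^ k.natAbs := by
  rw [← exp_nat_mul, exp_le_exp, Nat.cast_natAbs, Int.cast_abs]
  have : |(k : ℝ)| ≤ (k : ℝ) ^ 2 := by
    rw [← sq_abs]
    rcases eq_or_ne k 0 with rfl | hk
    · simp
    · exact le_self_pow₀ (by exact_mod_cast Int.one_le_abs hk) two_ne_zero
  nlinarith

lemma summable_exp_neg_mul_int_sq {c : ℝ} (hc : 0 < c) :
    Summable fun k : ℤ => rexp (-c * k ^ 2) :=
  .of_nonneg_of_le (fun _ => (exp_pos _).le) (exp_neg_mul_sq_le_pow_natAbs hc.le)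
    (hasSum_pow_natAbs (exp_pos _).le (exp_lt_one_iff.mpr (neg_neg_of_pos hc))).summable

lemma tsum_exp_neg_mul_int_sq_le {c : ℝ} (hc : 0 < c) :
    ∑' k : ℤ, rexp (-c * k ^ 2) ≤ (1 + rexp (-c)) / (1 - rexp (-c)) := by
  have h := hasSum_pow_natAbs (exp_pos (-c)).le (exp_lt_one_iff.mpr (neg_neg_of_pos hc))
  rw [← h.tsum_eq]
  exact (summable_exp_neg_mul_int_sq hc).tsum_le_tsum (exp_neg_mul_sq_le_pow_natAbs hc.le)
    h.summable

lemma summable_exp_neg_sq_sub_div {lam : ℝ} (hlam : 0 < lam) (t : ℝ) :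
    Summable fun k : ℤ => rexp (-((k : ℝ) - t) ^ 2 / lam) := by
  refine .of_nonneg_of_le (fun _ => (exp_pos _).le) (fun k => ?_)
    ((summable_exp_neg_mul_int_sq (c := (2 * lam)⁻¹) (by positivity)).mul_left
      (rexp (t ^ 2 / lam)))
  rw [← exp_add, exp_le_exp, ← sub_nonneg]
  field_simp
  nlinarith [sq_nonneg ((k : ℝ) - 2 * t)]

open Complex in
lemma tsum_exp_neg_sq_sub_div_le {lam : ℝ} (hlam : 0 < lam) (t : ℝ) :
    ∑' k : ℤ, rexp (-((k : ℝ) - t) ^ 2 / lam) ≤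
      √(π * lam) * ∑' k : ℤ, rexp (-(π ^ 2 * lam) * k ^ 2) := by
  have hπlam : 0 < π * lam := by positivity
  -- Jacobi's transformation with `a = 1/(πλ)`, `b = t/(πλ)`; completing the square puts the
  -- factor `e = exp(t²/λ)` on both sides.
  set a : ℂ := (((π * lam)⁻¹ : ℝ) : ℂ) with ha_def
  set b : ℂ := ((t / (π * lam) : ℝ) : ℂ) with hb_def
  set e : ℝ := rexp (t ^ 2 / lam) with he_def
  set S := ∑' k : ℤ, rexp (-((k : ℝ) - t) ^ 2 / lam)
  set Θ := ∑' k : ℤ, rexp (-(π ^ 2 * lam) * k ^ 2)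
  have ha : 0 < a.re := by rw [ofReal_re]; positivity
  have hlhs (k : ℤ) : cexp (-π * a * k ^ 2 + 2 * π * b * k) =
      ((e * rexp (-((k : ℝ) - t) ^ 2 / lam) : ℝ) : ℂ) := by
    rw [he_def, ← Real.exp_add, ofReal_exp, ha_def, hb_def]
    congr 1
    push_cast
    field_simp
    ring
  have hrhs (k : ℤ) : ‖cexp (-π / a * (k + I * b) ^ 2)‖ = e * rexp (-(π ^ 2 * lam) * k ^ 2) := by
    have hre : -π / a = ((-(π ^ 2 * lam) : ℝ) : ℂ) := by
      rw [ha_def]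
      push_cast
      field_simp
    rw [norm_exp, hre, re_ofReal_mul, he_def, ← Real.exp_add]
    congr 1
    simp only [sq, mul_re, mul_im, add_re, add_im, intCast_re, intCast_im, I_re, I_im, hb_def,
      ofReal_re, ofReal_im]
    field_simp
    ring
  have hpre : ‖1 / a ^ (1 / 2 : ℂ)‖ = √(π * lam) := by
    rw [one_div, norm_inv, norm_cpow_eq_rpow_re_of_pos (inv_pos.mpr hπlam),
      Real.inv_rpow hπlam.le, inv_inv, sqrt_eq_rpow]
    norm_num
  have hΘ : Summable fun k : ℤ => e * rexp (-(π ^ 2 * lam) * k ^ 2) :=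
    (summable_exp_neg_mul_int_sq (by positivity)).mul_left e
  have poisson := Complex.tsum_exp_neg_quadratic ha b
  simp_rw [hlhs, ← ofReal_tsum, tsum_mul_left] at poisson
  have key : e * S ≤ e * (√(π * lam) * Θ) := calc
    e * S = ‖((e * S : ℝ) : ℂ)‖ := by
      rw [norm_real, Real.norm_of_nonneg (by positivity)]
    _ ≤ √(π * lam) * ∑' k : ℤ, ‖cexp (-π / a * (k + I * b) ^ 2)‖ := by
      rw [poisson, norm_mul, hpre]
      gcongr
      exact norm_tsum_le_tsum_norm (by simpa only [hrhs] using hΘ)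
    _ = e * (√(π * lam) * Θ) := by
      simp_rw [hrhs, tsum_mul_left]
      ring
  exact le_of_mul_le_mul_left key (exp_pos _)

lemma tsum_exp_neg_sq_sub_div_le_sqrt {lam : ℝ} (hlam : 1 ≤ lam) (t : ℝ) :
    ∑' k : ℤ, rexp (-((k : ℝ) - t) ^ 2 / lam) ≤ √(2 * π * lam) := by
  have hc : 9 ≤ π ^ 2 * lam := by nlinarith [pi_gt_three]
  set c := π ^ 2 * lam
  have hr : rexp (-c) ≤ 1 / 10 := by
    rw [exp_neg, inv_le_comm₀ (exp_pos c) (by norm_num)]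
    linarith [add_one_le_exp c]
  have htheta : ∑' k : ℤ, rexp (-c * k ^ 2) ≤ √2 := calc
    _ ≤ (1 + rexp (-c)) / (1 - rexp (-c)) := tsum_exp_neg_mul_int_sq_le (by linarith)
    _ ≤ 11 / 9 := by rw [div_le_iff₀ (by linarith)]; linarith
    _ ≤ √2 := Real.le_sqrt_of_sq_le (by norm_num)
  calc _ ≤ √(π * lam) * ∑' k : ℤ, rexp (-c * k ^ 2) := tsum_exp_neg_sq_sub_div_le (by linarith) t
    _ ≤ √(π * lam) * √2 := by gcongr
    _ = √(2 * π * lam) := by rw [← sqrt_mul (by positivity)]; ring_nf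

lemma ENNReal.prod_tsum_eq_tsum_pi {α : Type*} :
    ∀ {n : ℕ} (g : Fin n → α → ENNReal), ∏ i, ∑' a, g i a = ∑' f : Fin n → α, ∏ i, g i (f i)
  | 0, g => by simp
  | n + 1, g => by
    rw [← (Fin.consEquiv fun _ => α).tsum_eq, ENNReal.tsum_prod', Fin.prod_univ_succ,
      ← ENNReal.tsum_mul_right, prod_tsum_eq_tsum_pi]
    simp [Fin.consEquiv, Fin.prod_univ_succ, ENNReal.tsum_mul_left]

lemma ENNReal.ofReal_exp_neg_norm_sq_div {ι : Type*} [Fintype ι] (x : EuclideanSpace ℝ ι)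
    (lam : ℝ) :
    ENNReal.ofReal (rexp (-‖x‖ ^ 2 / lam)) = ∏ i, ENNReal.ofReal (rexp (-x i ^ 2 / lam)) := by
  rw [← ENNReal.ofReal_prod_of_nonneg fun _ _ => (exp_pos _).le, ← exp_sum,
    EuclideanSpace.norm_sq_eq, ← Finset.sum_div, ← Finset.sum_neg_distrib]
  simp

theorem lattice_gaussian_sum_general (n : ℕ) (lam : ℝ) (hlam : 1 ≤ lam)
    (ε₀ : EuclideanSpace ℝ (Fin n)) :
    (∑' α : Fin n → ℤ, ENNReal.ofReal
        (Real.exp (-‖(WithLp.equiv 2 (Fin n → ℝ)).symm (fun i => (α i : ℝ)) - ε₀‖ ^ 2 / lam))) ≤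
      ENNReal.ofReal ((2 * Real.pi * lam) ^ ((n : ℝ) / 2)) := by
  simp only [ENNReal.ofReal_exp_neg_norm_sq_div, PiLp.sub_apply, WithLp.equiv_symm_apply]
  rw [← ENNReal.prod_tsum_eq_tsum_pi fun i (k : ℤ) =>
    ENNReal.ofReal (rexp (-((k : ℝ) - ε₀ i) ^ 2 / lam))]
  calc _ ≤ ∏ _i : Fin n, ENNReal.ofReal √(2 * π * lam) := by
        gcongr with i
        rw [← ENNReal.ofReal_tsum_of_nonneg (fun _ => (exp_pos _).le)
          (summable_exp_neg_sq_sub_div (by linarith) _)]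
        exact ENNReal.ofReal_le_ofReal (tsum_exp_neg_sq_sub_div_le_sqrt hlam _)
    _ = ENNReal.ofReal ((2 * π * lam) ^ ((n : ℝ) / 2)) := by
        rw [Finset.prod_const, Finset.card_fin, ← ENNReal.ofReal_pow (sqrt_nonneg _), sqrt_eq_rpow,
          ← rpow_natCast, ← rpow_mul (by positivity)]
        ring_nf

/-- The first lattice Gaussian sum estimate of Appendix 2:
`Σ_{α∈ℤ^n} exp(-|α-ε₀|²/λ) ≤ (2πλ)^{n/2}`, uniformly in the offset `ε₀`. -/
theorem lattice_gaussian_sum (n : ℕ) (hn : 1 ≤ n) (lam : ℝ) (hlam : 1 ≤ lam)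
    (ε₀ : EuclideanSpace ℝ (Fin n)) :
    (∑' α : Fin n → ℤ, ENNReal.ofReal
        (Real.exp (-‖(WithLp.equiv 2 (Fin n → ℝ)).symm (fun i => (α i : ℝ)) - ε₀‖ ^ 2 / lam))) ≤
      ENNReal.ofReal ((2 * Real.pi * lam) ^ ((n : ℝ) / 2)) :=
  lattice_gaussian_sum_general n lam hlam ε₀
end
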